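/- arXiv:2503.21733 — 2 statements merged into one kernel-verified Lean document; each statement's English description precedes it below -/
import Mathlib

section
/- Let G be a connected simple graph, let F be a spanning tree of G, and let v ≠ w be vertices. Then no vertex c ∉ {v, w} separates v from w in G (i.e., for every c ∉ {v, w}, v and w are connected in the graph obtained from G by deleting c) if and only if for every internal vertex y of the F-path from v to w, the two neighbors x and z of y on that path are biconnected in G. -/
/-- Two vertices `a` and `b` of a simple graph `H` are *biconnected* in `H` if `a ≠ b` and
there exist two distinct paths from `a` to `b` in `H` whose only common vertices are
`a` and `b`. -/
def Biconnected {V : Type*} (H : SimpleGraph V) (a b : V) : Prop :=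
  a ≠ b ∧ ∃ p q : H.Path a b, p ≠ q ∧
    ∀ x, x ∈ p.1.support → x ∈ q.1.support → (x = a ∨ x = b)

/-- The graph obtained from `H` by deleting the vertex `c` and all edges incident to it
(keeping the same vertex type). -/
def removeVertex {V : Type*} (H : SimpleGraph V) (c : V) : SimpleGraph V where
  Adj a b := H.Adj a b ∧ a ≠ c ∧ b ≠ c
  symm := by
    constructor
    intro a b h
    exact ⟨h.1.symm, h.2.2, h.2.1⟩
  loopless := by
    constructor
    intro a h
    exact H.irrefl h.1

/-!
If `v` and `w` stay connected without `y`, then every vertex of an `F`-path `P` from `v` to `w`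
other than `y` stays connected to `v`, being joined to `v` or to `w` by a piece of `P` avoiding
`y`; so the two neighbours `x`, `z` of `y` on `P` are joined by a path avoiding `y`, which together
with `x - y - z` witnesses their biconnectivity. Conversely, a vertex `c` off `P` cannot separate
`v` from `w`, and if `c` is an internal vertex of `P` with neighbours `x`, `z` on it, one of the two
internally disjoint `x`-`z` paths avoids `c` and bridges the gap that `c` leaves in `P`.
-/

open SimpleGraph

section

variable {V : Type*}

lemma removeVertex_le (G : SimpleGraph V) (c : V) : removeVertex G c ≤ G :=
  fun _ _ h => h.1

lemma reachable_removeVertex_of_walk {G H : SimpleGraph V} (hHG : H ≤ G) {a b c : V}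
    (p : H.Walk a b) (hc : c ∉ p.support) : (removeVertex G c).Reachable a b := by
  induction p with
  | nil => rfl
  | @cons u u' b h p ih =>
    rw [Walk.support_cons, List.mem_cons, not_or] at hc
    have hadj : (removeVertex G c).Adj u u' :=
      ⟨hHG h, Ne.symm hc.1, fun hu' => hc.2 (hu' ▸ p.start_mem_support)⟩
    exact hadj.reachable.trans (ih hc.2)

lemma notMem_support_of_walk_removeVertex {G : SimpleGraph V} {a b c : V}
    (p : (removeVertex G c).Walk a b) (ha : a ≠ c) : c ∉ p.support := by
  induction p with
  | nil => simpa using ha.symm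
  | cons h p ih =>
    rw [Walk.support_cons, List.mem_cons, not_or]
    exact ⟨ha.symm, ih h.2.2⟩

lemma exists_walk_of_reachable_removeVertex {G : SimpleGraph V} {a b c : V}
    (h : (removeVertex G c).Reachable a b) (ha : a ≠ c) : ∃ p : G.Walk a b, c ∉ p.support := by
  obtain ⟨p⟩ := h
  refine ⟨p.mapLe (removeVertex_le G c), ?_⟩
  rw [Walk.support_mapLe_eq_support]
  exact notMem_support_of_walk_removeVertex p ha

lemma biconnected_of_adj_of_reachable_removeVertex {G : SimpleGraph V} {x y z : V}
    (hxz : x ≠ z) (hxy : G.Adj x y) (hyz : G.Adj y z) (h : (removeVertex G y).Reachable x z) :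
    Biconnected G x z := by
  classical
  obtain ⟨p, hyp⟩ := exists_walk_of_reachable_removeVertex h hxy.ne
  have hyp' : y ∉ p.toPath.1.support := fun hy => hyp (p.support_toPath_subset_support hy)
  let q : G.Path x z := ⟨.cons hxy (.cons hyz .nil), by simp [hxy.ne, hyz.ne, hxz]⟩
  refine ⟨hxz, p.toPath, q, fun hpq => hyp' (hpq ▸ by simp [q]), fun u hup huq => ?_⟩
  simp only [q, Walk.support_cons, Walk.support_nil, List.mem_cons, List.not_mem_nil,
    or_false] at huq
  rcases huq with rfl | rfl | rfl
  · exact .inl rfl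
  · exact absurd hup hyp'
  · exact .inr rfl

lemma Biconnected.reachable_removeVertex {G : SimpleGraph V} {x z c : V} (h : Biconnected G x z)
    (hcx : c ≠ x) (hcz : c ≠ z) : (removeVertex G c).Reachable x z := by
  obtain ⟨-, p, q, -, hpq⟩ := h
  by_cases hcp : c ∈ p.1.support
  · have hcq : c ∉ q.1.support := fun hcq => (hpq c hcp hcq).elim hcx hcz
    exact reachable_removeVertex_of_walk le_rfl q.1 hcq
  · exact reachable_removeVertex_of_walk le_rfl p.1 hcp

namespace SimpleGraph.Walk.IsPath

variable {G : SimpleGraph V} {v w : V} {p : G.Walk v w}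

lemma notMem_takeUntil_or_notMem_dropUntil [DecidableEq V] (hp : p.IsPath) {u y : V}
    (hu : u ∈ p.support) (hyu : y ≠ u) :
    y ∉ (p.takeUntil u hu).support ∨ y ∉ (p.dropUntil u hu).support := by
  by_contra! hy
  have hnd := hp.support_nodup
  rw [← p.take_spec hu, Walk.support_append] at hnd
  have hy' : y ∈ (p.dropUntil u hu).support.tail := by
    have := hy.2
    rw [← Walk.cons_tail_support, List.mem_cons] at this
    exact this.resolve_left hyu
  exact List.disjoint_of_nodup_append hnd hy.1 hy'

lemma exists_snd_notMem_support (hp : p.IsPath) (hvw : v ≠ w) :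
    ∃ z, s(v, z) ∈ p.edges ∧ ∃ r : G.Walk z w, v ∉ r.support := by
  obtain ⟨z, h, r, rfl⟩ := Walk.exists_eq_cons_of_ne hvw p
  exact ⟨z, by simp, r, ((Walk.cons_isPath_iff h r).1 hp).2⟩

lemma exists_neighbors_of_mem_support [DecidableEq V] (hp : p.IsPath) {c : V}
    (hc : c ∈ p.support) (hcv : c ≠ v) (hcw : c ≠ w) :
    ∃ x z, s(c, x) ∈ p.edges ∧ s(c, z) ∈ p.edges ∧ x ≠ z ∧
      (∃ q : G.Walk x v, c ∉ q.support) ∧ ∃ r : G.Walk z w, c ∉ r.support := by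
  obtain ⟨x, hx, q, hq⟩ := (hp.takeUntil hc).reverse.exists_snd_notMem_support hcv
  obtain ⟨z, hz, r, hr⟩ := (hp.dropUntil hc).exists_snd_notMem_support hcw
  rw [Walk.edges_reverse, List.mem_reverse] at hx
  refine ⟨x, z, p.edges_takeUntil_subset_edges hc hx, p.edges_dropUntil_subset_edges hc hz,
    ?_, ⟨q, hq⟩, r, hr⟩
  -- otherwise the edge `s(c, x)` would occur in both halves of the trail `p`
  rintro rfl
  have hnd := hp.isTrail.edges_nodup
  rw [← p.take_spec hc, Walk.edges_append] at hnd
  exact List.disjoint_of_nodup_append hnd hx hz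

end SimpleGraph.Walk.IsPath

end

theorem no_separator_iff_path_neighbors_biconnected_general {V : Type*}
    (G F : SimpleGraph V)
    (hFG : F ≤ G) (hFconn : F.Connected)
    (v w : V) :
    (∀ c : V, c ≠ v → c ≠ w → (removeVertex G c).Reachable v w) ↔
      (∀ (P : F.Path v w) (x y z : V), y ∈ P.1.support → y ≠ v → y ≠ w →
        s(y, x) ∈ P.1.edges → s(y, z) ∈ P.1.edges → x ≠ z → Biconnected G x z) := by
  classical
  constructor
  · intro h P x y z hy hyv hyw hx hz hxz
    have hyx : F.Adj y x := P.1.adj_of_mem_edges hx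
    have hyz : F.Adj y z := P.1.adj_of_mem_edges hz
    have reach_v : ∀ u ∈ P.1.support, u ≠ y → (removeVertex G y).Reachable u v := by
      intro u hu huy
      rcases P.2.notMem_takeUntil_or_notMem_dropUntil hu huy.symm with hy' | hy'
      · exact (reachable_removeVertex_of_walk hFG _ hy').symm
      · exact (reachable_removeVertex_of_walk hFG _ hy').trans (h y hyv hyw).symm
    refine biconnected_of_adj_of_reachable_removeVertex hxz (hFG hyx).symm (hFG hyz) ?_
    exact (reach_v x (P.1.snd_mem_support_of_mem_edges hx) hyx.ne').trans
      (reach_v z (P.1.snd_mem_support_of_mem_edges hz) hyz.ne').symm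
  · intro h c hcv hcw
    obtain ⟨P, hP⟩ := hFconn.exists_isPath v w
    by_cases hc : c ∈ P.support
    · obtain ⟨x, z, hx, hz, hxz, ⟨q, hq⟩, r, hr⟩ := hP.exists_neighbors_of_mem_support hc hcv hcw
      have hxz' := (h ⟨P, hP⟩ x c z hc hcv hcw hx hz hxz).reachable_removeVertex
        (P.adj_of_mem_edges hx).ne (P.adj_of_mem_edges hz).ne
      exact (reachable_removeVertex_of_walk hFG q hq).symm.trans
        (hxz'.trans (reachable_removeVertex_of_walk hFG r hr))
    · exact reachable_removeVertex_of_walk hFG P hc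

/-- Let `G` be a connected simple graph, let `F` be a spanning tree of `G`, and let
`v ≠ w` be vertices. Then no vertex `c ∉ {v, w}` separates `v` from `w` in `G` if and only
if for every internal vertex `y` of the `F`-path from `v` to `w`, the two neighbors `x`
and `z` of `y` on that path are biconnected in `G`. -/
theorem no_separator_iff_path_neighbors_biconnected {V : Type*}
    (G F : SimpleGraph V) (hG : G.Connected)
    (hFG : F ≤ G) (hacyc : F.IsAcyclic) (hFconn : F.Connected)
    (v w : V) (hvw : v ≠ w) :
    (∀ c : V, c ≠ v → c ≠ w → (removeVertex G c).Reachable v w) ↔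
      (∀ (P : F.Path v w) (x y z : V), y ∈ P.1.support → y ≠ v → y ≠ w →
        s(y, x) ∈ P.1.edges → s(y, z) ∈ P.1.edges → x ≠ z → Biconnected G x z) :=
  no_separator_iff_path_neighbors_biconnected_general G F hFG hFconn v w
end

section
/- Let G be a simple graph and let v ≠ w be vertices that are connected in G. Then v and w are adjacent or biconnected in G if and only if there is no vertex c ∉ {v, w} such that v and w are disconnected in the graph obtained from G by deleting c. In particular, two connected vertices are pseudo-biconnected (biconnected or joined by a bridge) if and only if no cutvertex separates them. -/
universe u

namespace SimpleGraph.Walk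

variable {V : Type u} {G : SimpleGraph V}

def InternallyDisjoint {v w : V} (p q : G.Walk v w) : Prop :=
  ∀ x ∈ p.support, x ∈ q.support → x = v ∨ x = w

variable {u v w z : V}

theorem InternallyDisjoint.symm {p q : G.Walk v w} (h : p.InternallyDisjoint q) :
    q.InternallyDisjoint p :=
  fun x hq hp => h x hp hq

theorem InternallyDisjoint.bypass [DecidableEq V] {p q : G.Walk v w}
    (h : p.InternallyDisjoint q) : p.bypass.InternallyDisjoint q.bypass :=
  fun x hp hq => h x (p.support_bypass_subset_support hp) (q.support_bypass_subset_support hq)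

theorem InternallyDisjoint.exists_notMem_support {p q : G.Walk v w} (h : p.InternallyDisjoint q)
    {c : V} (hcv : c ≠ v) (hcw : c ≠ w) : ∃ r : G.Walk v w, c ∉ r.support := by
  by_cases hc : c ∈ p.support
  · exact ⟨q, fun hq => (h c hc hq).elim hcv hcw⟩
  · exact ⟨p, hc⟩

theorem internallyDisjoint_toWalk_toWalk (h : G.Adj v w) :
    h.toWalk.InternallyDisjoint h.toWalk :=
  fun x hx _ => by simpa using hx

theorem adj_of_internallyDisjoint_self {p : G.Walk v w} (hvw : v ≠ w)
    (hp : p.InternallyDisjoint p) : G.Adj v w := by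
  cases p with
  | nil => exact absurd rfl hvw
  | cons h q =>
    have hy : _ ∈ (cons h q).support := List.mem_cons_of_mem _ q.start_mem_support
    rcases hp _ hy hy with rfl | rfl
    · exact absurd h (G.irrefl)
    · exact h

theorem exists_walk_to_first_mem (S : Set V) (p : G.Walk u v) (hv : v ∈ S) :
    ∃ z ∈ S, ∃ q : G.Walk u z, q.support ⊆ p.support ∧ ∀ x ∈ q.support, x ∈ S → x = z := by
  induction p with
  | nil => exact ⟨_, hv, nil, by simp, by simp⟩
  | @cons a _ _ h p ih =>
    by_cases ha : a ∈ S
    · exact ⟨a, ha, nil, by simp, by simp⟩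
    obtain ⟨z, hz, q, hqp, hq⟩ := ih hv
    refine ⟨z, hz, cons h q, by simpa using List.subset_cons_of_subset _ hqp, ?_⟩
    intro x hx hxS
    rcases List.mem_cons.mp hx with rfl | hx
    · exact absurd hxS ha
    · exact hq x hx hxS

theorem internallyDisjoint_concat_takeUntil_append [DecidableEq V] {P₁ P₂ : G.Walk v u}
    (hP₁ : P₁.IsPath) (hP : P₁.InternallyDisjoint P₂) (huw : G.Adj u w)
    (hz : z ∈ P₁.support) (T : G.Walk z w) (huT : u ∉ T.support)
    (hT : ∀ x ∈ T.support, x ∈ P₁.support ∨ x ∈ P₂.support → x = z) :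
    (P₂.concat huw).InternallyDisjoint ((P₁.takeUntil z hz).append T) := by
  have huz : u ≠ z := fun h => huT (h ▸ T.start_mem_support)
  intro x hxA hxB
  rw [support_concat, List.mem_append, List.mem_singleton] at hxA
  rcases hxA with hx₂ | rfl
  · rcases (mem_support_append_iff _ _).mp hxB with hx₁ | hxT
    · rcases hP x (P₁.support_takeUntil_subset_support hz hx₁) hx₂ with rfl | rfl
      · exact Or.inl rfl
      · exact absurd hx₁ (endpoint_notMem_support_takeUntil hP₁ hz huz)
    · obtain rfl := hT x hxT (Or.inr hx₂)
      rcases hP x hz hx₂ with rfl | rfl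
      · exact Or.inl rfl
      · exact absurd hxT huT
  · exact Or.inr rfl

theorem forall_exists_walk_notMem_of_adj (huw : G.Adj u w) (Q : G.Walk v u)
    (hwQ : w ∉ Q.support) (hsep : ∀ c, c ≠ v → c ≠ w → ∃ p : G.Walk v w, c ∉ p.support) :
    ∀ c, c ≠ v → c ≠ u → ∃ p : G.Walk v u, c ∉ p.support := by
  classical
  intro c hcv hcu
  by_cases hcw : c = w
  · exact ⟨Q, hcw ▸ hwQ⟩
  obtain ⟨R, hR⟩ := hsep c hcv hcw
  by_cases hu : u ∈ R.support
  · exact ⟨R.takeUntil u hu, fun hc => hR (R.support_takeUntil_subset_support hu hc)⟩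
  · refine ⟨R.concat huw.symm, ?_⟩
    simp [support_concat, hR, hcu]

theorem exists_internallyDisjoint_paths (hr : G.Reachable v w) (hvw : v ≠ w)
    (hsep : ∀ c, c ≠ v → c ≠ w → ∃ p : G.Walk v w, c ∉ p.support) :
    ∃ p q : G.Walk v w, p.IsPath ∧ q.IsPath ∧ p.InternallyDisjoint q := by
  classical
  induction hn : G.dist v w using Nat.strong_induction_on generalizing w with
  | _ n ih =>
  by_cases hadj : G.Adj v w
  · exact ⟨hadj.toWalk, hadj.toWalk, by simp [hvw], by simp [hvw],
      internallyDisjoint_toWalk_toWalk hadj⟩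
  obtain ⟨P, hP⟩ := hr.exists_walk_length_eq_dist
  have hPnil : ¬ P.Nil := fun h => hvw h.eq
  set u := P.penultimate
  have huw : G.Adj u w := P.adj_penultimate hPnil
  have hvu : v ≠ u := fun h => hadj (h ▸ huw)
  have hwQ : w ∉ P.dropLast.support := by
    have := (P.isPath_of_length_eq_dist hP).support_nodup
    rw [← support_dropLast_concat hPnil, ← List.concat_eq_append, List.nodup_concat] at this
    exact this.1
  have hdist : G.dist v u < n :=
    calc G.dist v u ≤ P.dropLast.length := dist_le _
      _ < P.length := by have := length_dropLast_add_one hPnil; omega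
      _ = n := hP.trans hn
  obtain ⟨P₁, P₂, hP₁, hP₂, hP⟩ := ih _ hdist P.dropLast.reachable hvu
    (forall_exists_walk_notMem_of_adj huw _ hwQ hsep) rfl
  obtain ⟨R, hR⟩ := hsep _ hvu.symm huw.ne
  obtain ⟨z, hzS, T, hTR, hT⟩ := R.reverse.exists_walk_to_first_mem
    {x | x ∈ P₁.support ∨ x ∈ P₂.support} (Or.inl P₁.start_mem_support)
  have huT : u ∉ T.reverse.support := by
    simpa using fun h => hR (by simpa using hTR h)
  have hT' : ∀ x ∈ T.reverse.support, x ∈ P₁.support ∨ x ∈ P₂.support → x = z :=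
    fun x hx => hT x (by simpa using hx)
  rcases hzS with hz | hz
  · exact ⟨_, _, bypass_isPath _, bypass_isPath _,
      (internallyDisjoint_concat_takeUntil_append hP₁ hP huw hz _ huT hT').bypass⟩
  · exact ⟨_, _, bypass_isPath _, bypass_isPath _,
      (internallyDisjoint_concat_takeUntil_append hP₂ hP.symm huw hz _ huT
        fun x hx hxS => hT' x hx hxS.symm).bypass⟩

end SimpleGraph.Walk

section

open SimpleGraph Walk

variable {V : Type u} {G : SimpleGraph V} {v w : V}

theorem removeVertex_reachable_iff {a b c : V} (hac : a ≠ c) :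
    (removeVertex G c).Reachable a b ↔ ∃ p : G.Walk a b, c ∉ p.support := by
  constructor
  · rintro ⟨p⟩
    induction p with
    | nil => exact ⟨nil, by simpa using hac.symm⟩
    | cons h _ ih =>
      obtain ⟨q, hq⟩ := ih h.2.2
      exact ⟨cons h.1 q, by simpa [hq] using h.2.1.symm⟩
  · rintro ⟨p, hp⟩
    induction p with
    | nil => rfl
    | cons h q ih =>
      simp only [support_cons, List.mem_cons, not_or] at hp
      have hnext : _ ≠ c := fun h => hp.2 (h ▸ q.start_mem_support)
      have hadj : (removeVertex G c).Adj _ _ := ⟨h, hac, hnext⟩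
      exact hadj.reachable.trans (ih hnext hp.2)

theorem adj_or_biconnected_iff_exists_internallyDisjoint_paths (hvw : v ≠ w) :
    (G.Adj v w ∨ Biconnected G v w) ↔
      ∃ p q : G.Walk v w, p.IsPath ∧ q.IsPath ∧ p.InternallyDisjoint q := by
  constructor
  · rintro (hadj | ⟨-, p, q, -, hpq⟩)
    · exact ⟨hadj.toWalk, hadj.toWalk, by simp [hvw], by simp [hvw],
        internallyDisjoint_toWalk_toWalk hadj⟩
    · exact ⟨p, q, p.2, q.2, hpq⟩
  · rintro ⟨p, q, hp, hq, hpq⟩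
    by_cases h : p = q
    · subst h
      exact Or.inl (adj_of_internallyDisjoint_self hvw hpq)
    · exact Or.inr ⟨hvw, ⟨p, hp⟩, ⟨q, hq⟩, fun h' => h (congrArg Subtype.val h'), hpq⟩

theorem biconnected_of_adj_of_not_isBridge (hadj : G.Adj v w) (hbr : ¬ G.IsBridge s(v, w)) :
    Biconnected G v w := by
  classical
  obtain ⟨p, hp⟩ := not_forall.mp (isBridge_iff_forall_walk_mem_edges.not.mp hbr)
  refine ⟨hadj.ne, Path.singleton hadj, p.toPath, fun h => hp ?_,
    fun x hx _ => by simpa using hx⟩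
  apply edges_bypass_subset_edges
  have : [s(v, w)] = p.bypass.edges := congrArg (fun p : G.Path v w => p.1.edges) h
  simp [← this]

/-- Let `G` be a simple graph and let `v ≠ w` be vertices that are connected in `G`.
Then `v` and `w` are adjacent or biconnected in `G` if and only if there is no vertex
`c ∉ {v, w}` such that `v` and `w` are disconnected in the graph obtained from `G` by
deleting `c`. In particular, two connected vertices are pseudo-biconnected (biconnected
or joined by a bridge) if and only if no cutvertex separates them. -/
theorem adj_or_biconnected_iff_no_separator {V : Type*} (G : SimpleGraph V)
    (v w : V) (hvw : v ≠ w) (hconn : G.Reachable v w) :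
    ((G.Adj v w ∨ Biconnected G v w) ↔
      ¬ ∃ c : V, c ≠ v ∧ c ≠ w ∧ ¬ (removeVertex G c).Reachable v w) ∧
    ((Biconnected G v w ∨ (G.Adj v w ∧ G.IsBridge s(v, w))) ↔
      ¬ ∃ c : V, c ≠ v ∧ c ≠ w ∧ ¬ (removeVertex G c).Reachable v w) := by
  have no_separator_iff : (¬ ∃ c : V, c ≠ v ∧ c ≠ w ∧ ¬ (removeVertex G c).Reachable v w) ↔
      ∀ c, c ≠ v → c ≠ w → ∃ p : G.Walk v w, c ∉ p.support := by
    push Not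
    exact forall₃_congr fun c hcv _ => removeVertex_reachable_iff hcv.symm
  have adj_or_biconnected_iff : (G.Adj v w ∨ Biconnected G v w) ↔
      ¬ ∃ c : V, c ≠ v ∧ c ≠ w ∧ ¬ (removeVertex G c).Reachable v w := by
    rw [no_separator_iff, adj_or_biconnected_iff_exists_internallyDisjoint_paths hvw]
    refine ⟨fun ⟨p, q, _, _, hpq⟩ c hcv hcw => hpq.exists_notMem_support hcv hcw,
      exists_internallyDisjoint_paths hconn hvw⟩
  refine ⟨adj_or_biconnected_iff, Iff.trans ⟨?_, ?_⟩ adj_or_biconnected_iff⟩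
  · rintro (hbic | ⟨hadj, -⟩)
    exacts [Or.inr hbic, Or.inl hadj]
  · rintro (hadj | hbic)
    · by_cases hbr : G.IsBridge s(v, w)
      exacts [Or.inr ⟨hadj, hbr⟩, Or.inl (biconnected_of_adj_of_not_isBridge hadj hbr)]
    · exact Or.inl hbic
end
end
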